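/- For all real constants C > 0 and γ > 2 there exists a constant K > 0 (depending only on C and γ) such that the following holds: for every finite simple undirected connected graph G=(V,E) with |V| ≥ 2 and diameter Δ, and every ρ ∈ (0,1], if |{v ∈ V : d(v) = k}| ≤ C·|V|/k^γ for every positive integer k, then min-seed^{(Δ)}(G,ρ) ≤ K·⌈ρ^{γ−1}·|V|⌉. -/

import Mathlib

/-!
Seed every vertex `v` with `ρ d(v) > 1` together with `⌈ρ d(v)⌉` of its neighbours, and both ends
of one edge. Each seed then has enough seeded neighbours to stay active in every round, while each
other vertex has `ρ d(v) ≤ 1` and is active as soon as one neighbour was; so activity spreads one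
step of graph distance per round and covers the graph after `Δ` rounds. There are
`O(ρ ∑_{ρ d(v) > 1} d(v))` seeds, and the power law bounds this by
`C |V| ρ ∑_{k > 1/ρ} k^(1-γ) = O(ρ^(γ-1) |V|)`.
-/

/-- One round of the synchronous reversible cascade on an undirected graph:
`ractive G ρ S k` is the set of active vertices in round `k`, starting from seed set `S`. -/
def ractive {V : Type*} (G : SimpleGraph V) (ρ : ℝ) (S : Set V) : ℕ → Set V
  | 0 => S
  | k + 1 =>
      {v | 0 < (G.neighborSet v).ncard ∧
        ρ * (G.neighborSet v).ncard ≤ ((G.neighborSet v ∩ ractive G ρ S k).ncard : ℝ)} ∪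
      {v | v ∈ S ∧ (G.neighborSet v).ncard = 0}

/-- `minSeed G ρ k` is the minimum number of seeds activating all vertices in round `k`. -/
noncomputable def minSeed {V : Type*} (G : SimpleGraph V) (ρ : ℝ) (k : ℕ) : ℕ :=
  sInf {m | ∃ S : Set V, S.ncard = m ∧ ractive G ρ S k = Set.univ}

open Finset SimpleGraph

def SelfSustaining {V : Type*} (G : SimpleGraph V) (ρ : ℝ) (S : Set V) : Prop :=
  ∀ v ∈ S, 0 < (G.neighborSet v).ncard ∧
    ρ * (G.neighborSet v).ncard ≤ ((G.neighborSet v ∩ S).ncard : ℝ)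

section Cascade

variable {V : Type*} {G : SimpleGraph V} {ρ : ℝ} {S : Set V}

lemma mem_ractive_succ {k : ℕ} {v : V} (hpos : 0 < (G.neighborSet v).ncard)
    (hv : ρ * (G.neighborSet v).ncard ≤ ((G.neighborSet v ∩ ractive G ρ S k).ncard : ℝ)) :
    v ∈ ractive G ρ S (k + 1) :=
  Or.inl ⟨hpos, hv⟩

lemma minSeed_le_ncard {k : ℕ} (h : ractive G ρ S k = Set.univ) : minSeed G ρ k ≤ S.ncard :=
  Nat.sInf_le ⟨S, rfl, h⟩

lemma SimpleGraph.Connected.exists_adj_dist_lt (hG : G.Connected) {u v : V} (huv : u ≠ v) :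
    ∃ w, G.Adj v w ∧ G.dist u w < G.dist u v := by
  obtain ⟨p, hp⟩ := hG.exists_walk_length_eq_dist v u
  have hnil : ¬p.Nil := p.not_nil_of_ne huv.symm
  refine ⟨p.getVert 1, p.adj_snd hnil, ?_⟩
  have hlen := p.length_tail_add_one hnil
  rw [dist_comm, dist_comm (u := u), ← hp]
  exact (dist_le p.tail).trans_lt (by omega)

variable [Finite V]

lemma mem_ractive_succ_of_adj {k : ℕ} {v w : V} (hvw : G.Adj v w) (hw : w ∈ ractive G ρ S k)
    (hlow : ρ * (G.neighborSet v).ncard ≤ 1) : v ∈ ractive G ρ S (k + 1) := by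
  have hpos : 0 < (G.neighborSet v ∩ ractive G ρ S k).ncard :=
    (Set.ncard_pos (Set.toFinite _)).mpr ⟨w, hvw, hw⟩
  refine mem_ractive_succ ?_ (hlow.trans (mod_cast hpos))
  exact hpos.trans_le (Set.ncard_le_ncard Set.inter_subset_left (Set.toFinite _))

lemma SelfSustaining.subset_ractive (hS : SelfSustaining G ρ S) : ∀ k, S ⊆ ractive G ρ S k
  | 0 => subset_rfl
  | k + 1 => fun v hv => mem_ractive_succ (hS v hv).1 <| (hS v hv).2.trans <| by
      gcongr
      exacts [Set.toFinite _, hS.subset_ractive k]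

lemma SelfSustaining.mem_ractive_of_dist_le (hS : SelfSustaining G ρ S) (hG : G.Connected)
    {u : V} (hu : u ∈ S) (hlow : ∀ v ∉ S, ρ * (G.neighborSet v).ncard ≤ 1) :
    ∀ (k : ℕ) (v : V), G.dist u v ≤ k → v ∈ ractive G ρ S k
  | 0, v, h => by
    rwa [← (hG u v).dist_eq_zero_iff.mp (Nat.le_zero.mp h)]
  | k + 1, v, h => by
    by_cases hv : v ∈ S
    · exact hS.subset_ractive _ hv
    obtain ⟨w, hvw, hw⟩ := hG.exists_adj_dist_lt (ne_of_mem_of_not_mem hu hv)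
    exact mem_ractive_succ_of_adj hvw (hS.mem_ractive_of_dist_le hG hu hlow k w (by omega))
      (hlow v hv)

lemma SelfSustaining.ractive_diam_eq_univ (hS : SelfSustaining G ρ S) (hG : G.Connected)
    {u : V} (hu : u ∈ S) (hlow : ∀ v ∉ S, ρ * (G.neighborSet v).ncard ≤ 1) :
    ractive G ρ S G.diam = Set.univ := by
  have := hG.nonempty
  exact Set.eq_univ_of_forall fun v => hS.mem_ractive_of_dist_le hG hu hlow _ v
    (dist_le_diam (connected_iff_ediam_ne_top.mp hG))

end Cascade

lemma card_union_biUnion_insert_le {α : Type*} [DecidableEq α] {H : Finset α}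
    {P : α → Finset α} {f : α → ℝ} (hf : ∀ v ∈ H, 1 < f v) (hP : ∀ v ∈ H, #(P v) = ⌈f v⌉₊)
    (a b : α) : (#(H ∪ H.biUnion P ∪ {a, b}) : ℝ) ≤ 3 * ∑ v ∈ H, f v + 2 := by
  have hcard : #(H ∪ H.biUnion P ∪ {a, b}) ≤ ∑ v ∈ H, (1 + #(P v)) + 2 := by
    rw [sum_add_distrib, sum_const, smul_eq_mul, mul_one]
    calc #(H ∪ H.biUnion P ∪ {a, b}) ≤ #H + #(H.biUnion P) + #({a, b} : Finset α) :=
          (card_union_le _ _).trans (Nat.add_le_add_right (card_union_le _ _) _)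
      _ ≤ #H + ∑ v ∈ H, #(P v) + 2 := by
          gcongr
          exacts [card_biUnion_le, card_le_two]
  have hterm : ∀ v ∈ H, (1 + #(P v) : ℝ) ≤ 3 * f v := by
    intro v hv
    have hceil := Nat.ceil_lt_add_one (zero_le_one.trans (hf v hv).le)
    rw [hP v hv]
    linarith [hf v hv]
  calc (#(H ∪ H.biUnion P ∪ {a, b}) : ℝ) ≤ ∑ v ∈ H, (1 + #(P v) : ℝ) + 2 := by
        exact_mod_cast hcard
    _ ≤ ∑ v ∈ H, 3 * f v + 2 := by gcongr with v hv; exact hterm v hv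
    _ = 3 * ∑ v ∈ H, f v + 2 := by rw [mul_sum]

section Seed

variable {V : Type*} [Fintype V] [DecidableEq V] {G : SimpleGraph V} [DecidableRel G.Adj]
  {ρ : ℝ}

omit [DecidableEq V] in
lemma ncard_neighborSet_eq_degree (v : V) : (G.neighborSet v).ncard = G.degree v := by
  rw [← card_neighborFinset_eq_degree, ← Set.ncard_coe_finset, coe_neighborFinset]

lemma selfSustaining_of_forall_exists_adj {S : Finset V} (hadj : ∀ v ∈ S, ∃ w ∈ S, G.Adj v w)
    (hhigh : ∀ v ∈ S, 1 < ρ * G.degree v → ρ * G.degree v ≤ #(G.neighborFinset v ∩ S)) :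
    SelfSustaining G ρ S := by
  intro v hv
  obtain ⟨w, hw, hvw⟩ := hadj v hv
  have hcard : (G.neighborSet v ∩ S).ncard = #(G.neighborFinset v ∩ S) := by
    rw [← Set.ncard_coe_finset, coe_inter, coe_neighborFinset]
  rw [ncard_neighborSet_eq_degree, hcard]
  refine ⟨(G.degree_pos_iff_exists_adj v).mpr ⟨w, hvw⟩, ?_⟩
  by_cases h : 1 < ρ * G.degree v
  · exact hhigh v hv h
  · have : 0 < #(G.neighborFinset v ∩ S) := card_pos.mpr ⟨w, by simp [hvw, hw]⟩
    exact (not_lt.mp h).trans (mod_cast this)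

lemma exists_selfSustaining_card_le (hρ1 : ρ ≤ 1) {u₀ u₁ : V} (h : G.Adj u₀ u₁) :
    ∃ S : Finset V, u₀ ∈ S ∧ SelfSustaining G ρ S ∧
      (∀ v ∉ (S : Set V), ρ * (G.neighborSet v).ncard ≤ 1) ∧
      (#S : ℝ) ≤ 3 * (ρ * ∑ v with 1 < ρ * G.degree v, (G.degree v : ℝ)) + 2 := by
  set H : Finset V := {v | 1 < ρ * G.degree v}
  have hP : ∀ v, ∃ t ⊆ G.neighborFinset v, #t = ⌈ρ * G.degree v⌉₊ := fun v =>
    exists_subset_card_eq <| by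
      rw [card_neighborFinset_eq_degree, Nat.ceil_le]
      exact mul_le_of_le_one_left (Nat.cast_nonneg _) hρ1
  choose P hPN hPcard using hP
  have hPadj : ∀ {v w}, w ∈ P v → G.Adj v w := fun hw => (mem_neighborFinset ..).mp (hPN _ hw)
  set S := H ∪ H.biUnion P ∪ {u₀, u₁}
  have hPS : ∀ v ∈ H, P v ⊆ S := fun v hv w hw =>
    mem_union_left _ (mem_union_right _ (mem_biUnion.mpr ⟨v, hv, hw⟩))
  have hHS : H ⊆ S := fun v hv => mem_union_left _ (mem_union_left _ hv)
  refine ⟨S, by simp [S], selfSustaining_of_forall_exists_adj ?_ ?_, ?_, ?_⟩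
  · intro v hv
    rcases mem_union.mp hv with hv | hv
    · rcases mem_union.mp hv with hvH | hvP
      · have hpos : 0 < #(P v) := by
          rw [hPcard, Nat.ceil_pos]
          exact one_pos.trans (mem_filter.mp hvH).2
        obtain ⟨w, hw⟩ := card_pos.mp hpos
        exact ⟨w, hPS v hvH hw, hPadj hw⟩
      · obtain ⟨w, hwH, hvw⟩ := mem_biUnion.mp hvP
        exact ⟨w, hHS hwH, (hPadj hvw).symm⟩
    · rcases mem_insert.mp hv with rfl | hv
      · exact ⟨u₁, by simp [S], h⟩
      · rw [mem_singleton.mp hv]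
        exact ⟨u₀, by simp [S], h.symm⟩
  · intro v _ hv
    have hvH : v ∈ H := mem_filter.mpr ⟨mem_univ v, hv⟩
    calc ρ * G.degree v ≤ #(P v) := by rw [hPcard]; exact Nat.le_ceil _
      _ ≤ #(G.neighborFinset v ∩ S) := by
        exact_mod_cast card_le_card (subset_inter (hPN v) (hPS v hvH))
  · intro v hv
    rw [ncard_neighborSet_eq_degree]
    exact not_lt.mp fun h => hv (hHS (mem_filter.mpr ⟨mem_univ v, h⟩))
  · rw [mul_sum]
    exact card_union_biUnion_insert_le (fun v hv => (mem_filter.mp hv).2) (fun v _ => hPcard v) _ _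

end Seed

section PowerLaw

lemma sum_Ioc_rpow_neg_le {s : ℝ} (hs : 1 < s) {m : ℕ} (hm : 0 < m) (b : ℕ) :
    ∑ k ∈ Ioc m b, (k : ℝ) ^ (-s) ≤ (m : ℝ) ^ (1 - s) / (s - 1) := by
  have hm' : (0 : ℝ) < m := by exact_mod_cast hm
  have hbound : 0 ≤ (m : ℝ) ^ (1 - s) / (s - 1) := div_nonneg (by positivity) (by linarith)
  rcases le_total b m with hbm | hmb
  · rwa [Ioc_eq_empty_of_le hbm, sum_empty]
  have hanti : AntitoneOn (fun x : ℝ => x ^ (-s)) (Set.Icc (m : ℝ) b) := fun x hx y _ hxy =>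
    Real.rpow_le_rpow_of_nonpos (hm'.trans_le hx.1) hxy (by linarith)
  have h0 : (0 : ℝ) ∉ Set.uIcc (m : ℝ) b := by
    rw [Set.uIcc_of_le (by exact_mod_cast hmb)]
    exact fun h => hm'.not_ge h.1
  calc ∑ k ∈ Ioc m b, (k : ℝ) ^ (-s) = ∑ i ∈ Ico m b, ((i + 1 : ℕ) : ℝ) ^ (-s) := by
        rw [sum_Ico_add' (fun k : ℕ => (k : ℝ) ^ (-s)), Ico_add_one_add_one_eq_Ioc]
    _ ≤ ∫ x in (m : ℝ)..b, x ^ (-s) := hanti.sum_le_integral_Ico hmb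
    _ = ((m : ℝ) ^ (1 - s) - (b : ℝ) ^ (1 - s)) / (s - 1) := by
        rw [integral_rpow (Or.inr ⟨by linarith, h0⟩), neg_add_eq_sub, ← neg_sub s 1, div_neg,
          ← neg_div, neg_sub]
    _ ≤ (m : ℝ) ^ (1 - s) / (s - 1) := by
        exact div_le_div_of_nonneg_right (sub_le_self _ (by positivity)) (by linarith)

variable {V : Type*} [Fintype V] {G : SimpleGraph V} [DecidableRel G.Adj] {C γ : ℝ}

lemma sum_degree_filter_lt_le (hC : 0 ≤ C) (hγ : 2 < γ)
    (hpl : ∀ k : ℕ, 0 < k → (#{v | G.degree v = k} : ℝ) ≤ C * Fintype.card V / (k : ℝ) ^ γ)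
    {m : ℕ} (hm : 0 < m) :
    ∑ v with m < G.degree v, (G.degree v : ℝ) ≤
      C * Fintype.card V * ((m : ℝ) ^ (2 - γ) / (γ - 2)) := by
  set n := Fintype.card V
  set H := univ.filter fun v => m < G.degree v
  have hmaps : ∀ v ∈ H, G.degree v ∈ Ioc m n := fun v hv =>
    mem_Ioc.mpr ⟨(mem_filter.mp hv).2, (G.degree_lt_card_verts v).le⟩
  have hfiber : ∀ k ∈ Ioc m n,
      ∑ v ∈ H with G.degree v = k, (G.degree v : ℝ) ≤ C * n * (k : ℝ) ^ (-(γ - 1)) := by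
    intro k hk
    have hk : (0 : ℝ) < k := by exact_mod_cast hm.trans (mem_Ioc.mp hk).1
    calc ∑ v ∈ H with G.degree v = k, (G.degree v : ℝ)
        = #{v ∈ H | G.degree v = k} * k := by
          rw [sum_congr rfl fun v hv => by rw [(mem_filter.mp hv).2], sum_const, nsmul_eq_mul]
      _ ≤ #{v | G.degree v = k} * k := by
          gcongr
          exact subset_univ H
      _ ≤ C * n / k ^ γ * k := by gcongr; exact hpl k (mod_cast hk)
      _ = C * n * (k : ℝ) ^ (-(γ - 1)) := by
          rw [neg_sub, Real.rpow_sub hk, Real.rpow_one]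
          field_simp
  calc ∑ v ∈ H, (G.degree v : ℝ)
      = ∑ k ∈ Ioc m n, ∑ v ∈ H with G.degree v = k, (G.degree v : ℝ) :=
        (sum_fiberwise_of_maps_to hmaps _).symm
    _ ≤ ∑ k ∈ Ioc m n, C * n * (k : ℝ) ^ (-(γ - 1)) := sum_le_sum hfiber
    _ ≤ C * n * ((m : ℝ) ^ (1 - (γ - 1)) / (γ - 1 - 1)) := by
        rw [← mul_sum]
        gcongr
        exact sum_Ioc_rpow_neg_le (by linarith) hm n
    _ = C * n * ((m : ℝ) ^ (2 - γ) / (γ - 2)) := by ring_nf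

lemma mul_sum_degree_filter_le (hC : 0 ≤ C) (hγ : 2 < γ)
    (hpl : ∀ k : ℕ, 0 < k → (#{v | G.degree v = k} : ℝ) ≤ C * Fintype.card V / (k : ℝ) ^ γ)
    {ρ : ℝ} (hρ : 0 < ρ) (hρ1 : ρ ≤ 1) :
    ρ * ∑ v with 1 < ρ * G.degree v, (G.degree v : ℝ) ≤
      2 ^ (γ - 2) / (γ - 2) * C * (ρ ^ (γ - 1) * Fintype.card V) := by
  set m := ⌊ρ⁻¹⌋₊
  have hm2 : ρ⁻¹ / 2 < m := Nat.div_two_lt_floor (one_le_inv₀ hρ |>.mpr hρ1)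
  have hm : 0 < m := by exact_mod_cast (by positivity : (0 : ℝ) < ρ⁻¹ / 2).trans hm2
  have hfilter : (univ.filter fun v => 1 < ρ * G.degree v) = univ.filter (m < G.degree ·) := by
    ext v
    simp only [mem_filter, mem_univ, true_and, m, Nat.floor_lt (inv_nonneg.mpr hρ.le),
      inv_lt_iff_one_lt_mul₀' hρ]
  have hmpow : (m : ℝ) ^ (2 - γ) ≤ (2 * ρ) ^ (γ - 2) :=
    calc (m : ℝ) ^ (2 - γ) ≤ (ρ⁻¹ / 2) ^ (2 - γ) :=
          Real.rpow_le_rpow_of_nonpos (by positivity) hm2.le (by linarith)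
      _ = (2 * ρ) ^ (γ - 2) := by
          rw [← neg_sub γ 2, Real.rpow_neg (by positivity), ← Real.inv_rpow (by positivity),
            inv_div, div_inv_eq_mul]
  have hρpow : ρ * (2 * ρ) ^ (γ - 2) = 2 ^ (γ - 2) * ρ ^ (γ - 1) := by
    rw [Real.mul_rpow zero_le_two hρ.le, show γ - 1 = γ - 2 + 1 by ring,
      Real.rpow_add_one hρ.ne']
    ring
  have hγ2 : 0 < γ - 2 := by linarith
  calc ρ * ∑ v with 1 < ρ * G.degree v, (G.degree v : ℝ)
      ≤ ρ * (C * Fintype.card V * ((m : ℝ) ^ (2 - γ) / (γ - 2))) := by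
        rw [hfilter]
        gcongr
        exact sum_degree_filter_lt_le hC hγ hpl hm
    _ ≤ ρ * (C * Fintype.card V * ((2 * ρ) ^ (γ - 2) / (γ - 2))) := by gcongr
    _ = 2 ^ (γ - 2) / (γ - 2) * C * (ρ ^ (γ - 1) * Fintype.card V) := by
        linear_combination C * Fintype.card V / (γ - 2) * hρpow

end PowerLaw

theorem stmt_12 (C γ : ℝ) (hC : 0 < C) (hγ : 2 < γ) :
    ∃ K : ℝ, 0 < K ∧
      ∀ (V : Type) [Fintype V] (G : SimpleGraph V), G.Connected → 2 ≤ Fintype.card V →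
        ∀ ρ : ℝ, 0 < ρ → ρ ≤ 1 →
          (∀ k : ℕ, 0 < k →
            ((({v : V | (G.neighborSet v).ncard = k} : Set V).ncard : ℝ) ≤
              C * (Fintype.card V) / (k : ℝ) ^ γ)) →
          (minSeed G ρ G.diam : ℝ) ≤ K * (⌈ρ ^ (γ - 1) * (Fintype.card V : ℝ)⌉ : ℝ) := by
  classical
  have hγ2 : 0 < γ - 2 := by linarith
  set K' := 2 ^ (γ - 2) / (γ - 2) * C
  have hK' : 0 < K' := by positivity
  refine ⟨3 * K' + 2, by positivity, fun V _ G hG hcard ρ hρ hρ1 hpl => ?_⟩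
  have : Nontrivial V := Fintype.one_lt_card_iff_nontrivial.mp hcard
  obtain ⟨u₀⟩ := hG.nonempty
  obtain ⟨u₁, h⟩ := hG.preconnected.exists_adj_of_nontrivial u₀
  obtain ⟨S, hu₀, hS, hlow, hScard⟩ := exists_selfSustaining_card_le hρ1 h
  have hpl' (k : ℕ) (hk : 0 < k) :
      (#{v | G.degree v = k} : ℝ) ≤ C * Fintype.card V / (k : ℝ) ^ γ := by
    convert hpl k hk using 3
    simp [← Set.ncard_coe_finset, ncard_neighborSet_eq_degree]
  set A := ρ ^ (γ - 1) * Fintype.card V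
  have hA : A ≤ ⌈A⌉ := Int.le_ceil A
  have hA1 : (1 : ℝ) ≤ ⌈A⌉ := by exact_mod_cast Int.one_le_ceil_iff.mpr (by positivity)
  calc (minSeed G ρ G.diam : ℝ) ≤ #S := by
        exact_mod_cast (minSeed_le_ncard (hS.ractive_diam_eq_univ hG hu₀ hlow)).trans_eq
          (Set.ncard_coe_finset S)
    _ ≤ 3 * (K' * A) + 2 := by
        grw [hScard, mul_sum_degree_filter_le hC.le hγ hpl' hρ hρ1, mul_assoc]
    _ ≤ (3 * K' + 2) * ⌈A⌉ := by nlinarith [mul_le_mul_of_nonneg_left hA hK'.le]
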